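/- The maximum over all three-module one-bit classical sequential processors of the correlation (1/64) · Σ_{x ∈ {0,1}^6} O(x) · T(x) between the output O and the target function T equals 1/4. -/

import Mathlib

/-- Domain of six input bits. -/
abbrev Bits6 := Fin 2 × Fin 2 × Fin 2 × Fin 2 × Fin 2 × Fin 2

/-- The 4×16 matrix defining the target function of the three-module single-qubit
processor. -/
def M : Fin 4 → Fin 16 → ℤ :=
  ![![-1,  1,  0,  0,  1, -1,  0,  0,  0,  0,  1, -1,  0,  0, -1,  1],
    ![ 1, -1,  0,  0, -1,  1,  0,  0,  0,  0, -1,  1,  0,  0,  1, -1],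
    ![ 0,  0,  1, -1,  0,  0, -1,  1,  1, -1,  0,  0, -1,  1,  0,  0],
    ![ 0,  0, -1,  1,  0,  0,  1, -1, -1,  1,  0,  0,  1, -1,  0,  0]]

/-- Row index `2*X1 + X2`. -/
def row4 (x1 x2 : Fin 2) : Fin 4 := ⟨2 * x1.val + x2.val, by omega⟩

/-- Column index `8*X3 + 4*X4 + 2*X5 + X6`. -/
def col16 (x3 x4 x5 x6 : Fin 2) : Fin 16 :=
  ⟨8 * x3.val + 4 * x4.val + 2 * x5.val + x6.val, by omega⟩

/-- The target function `T : {0,1}^6 → {-1,0,1}`. -/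
def T : Bits6 → ℤ
  | (x1, x2, x3, x4, x5, x6) => M (row4 x1 x2) (col16 x3 x4 x5 x6)

/-- Output of a three-module one-bit classical sequential processor given by the
module strategies `f1`, `f2`, `f3`. -/
def output3bit (f1 : Fin 2 × Fin 2 → Fin 2) (f2 : Fin 2 → Fin 2 × Fin 2 → Fin 2)
    (f3 : Fin 2 → Fin 2 × Fin 2 → ℤ) : Bits6 → ℤ
  | (x1, x2, x3, x4, x5, x6) => f3 (f2 (f1 (x1, x2)) (x3, x4)) (x5, x6)


/-- Partial sum for a fixed module-1 output `a` and row `r`. -/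
def Sr (f2 : Fin 2 → Fin 2 × Fin 2 → Fin 2) (f3 : Fin 2 → Fin 2 × Fin 2 → ℤ)
    (a : Fin 2) (r : Fin 4) : ℤ :=
  ∑ p : Fin 2 × Fin 2, ∑ q : Fin 2 × Fin 2, f3 (f2 a p) q * M r (col16 p.1 p.2 q.1 q.2)

section
variable (f1 : Fin 2 × Fin 2 → Fin 2) (f2 : Fin 2 → Fin 2 × Fin 2 → Fin 2)
    (f3 : Fin 2 → Fin 2 × Fin 2 → ℤ)

lemma L1 : ∑ x : Bits6, output3bit f1 f2 f3 x * T x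
    = Sr f2 f3 (f1 (0,0)) (row4 0 0) + Sr f2 f3 (f1 (0,1)) (row4 0 1)
      + Sr f2 f3 (f1 (1,0)) (row4 1 0) + Sr f2 f3 (f1 (1,1)) (row4 1 1) := by
  simp only [Sr, output3bit, T, Fintype.sum_prod_type, Fin.sum_univ_two]
  ring

lemma L2a (a : Fin 2) : Sr f2 f3 a 1 = - Sr f2 f3 a 0 := by
  have hM : ∀ k : Fin 16, M 1 k = - M 0 k := by decide
  simp only [Sr, hM, mul_neg, Finset.sum_neg_distrib]

lemma L2b (a : Fin 2) : Sr f2 f3 a 3 = - Sr f2 f3 a 2 := by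
  have hM : ∀ k : Fin 16, M 3 k = - M 2 k := by decide
  simp only [Sr, hM, mul_neg, Finset.sum_neg_distrib]

lemma hsplit (a b : Fin 2) (r : Fin 4) :
    Sr f2 f3 a r - Sr f2 f3 b r
      = ((b.val : ℤ) - a.val) * (Sr f2 f3 0 r - Sr f2 f3 1 r) := by
  fin_cases a <;> fin_cases b <;> simp <;> ring

lemma hd (p q : Fin 2 × Fin 2) :
    f3 (f2 0 p) q - f3 (f2 1 p) q
      = (((f2 0 p).val : ℤ) - ((f2 1 p).val : ℤ)) * (f3 1 q - f3 0 q) := by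
  have h2 : ∀ x : Fin 2, x = 0 ∨ x = 1 := by decide
  rcases h2 (f2 0 p) with h0 | h0 <;> rcases h2 (f2 1 p) with h1 | h1 <;>
    rw [h0, h1] <;> simp <;> ring

lemma hdiff (r : Fin 4) :
    Sr f2 f3 0 r - Sr f2 f3 1 r
      = ∑ p : Fin 2 × Fin 2, ∑ q : Fin 2 × Fin 2,
          ((((f2 0 p).val : ℤ) - ((f2 1 p).val : ℤ)) * (f3 1 q - f3 0 q))
            * M r (col16 p.1 p.2 q.1 q.2) := by
  simp only [Sr, ← Finset.sum_sub_distrib, ← sub_mul, hd]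

lemma e0 :
    Sr f2 f3 0 0 - Sr f2 f3 1 0
      = ((((f2 0 (0,0)).val : ℤ) - (f2 1 (0,0)).val) - (((f2 0 (0,1)).val : ℤ) - (f2 1 (0,1)).val))
          * (f3 1 (0,1) - f3 0 (0,1) - (f3 1 (0,0) - f3 0 (0,0)))
        + ((((f2 0 (1,0)).val : ℤ) - (f2 1 (1,0)).val) - (((f2 0 (1,1)).val : ℤ) - (f2 1 (1,1)).val))
          * (f3 1 (1,0) - f3 0 (1,0) - (f3 1 (1,1) - f3 0 (1,1))) := by
  rw [hdiff]
  simp only [Fintype.sum_prod_type, Fin.sum_univ_two]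
  norm_num [col16, M, Matrix.cons_val_zero, Matrix.cons_val_one, Matrix.head_cons]
  ring

lemma e2 :
    Sr f2 f3 0 2 - Sr f2 f3 1 2
      = ((((f2 0 (0,0)).val : ℤ) - (f2 1 (0,0)).val) - (((f2 0 (0,1)).val : ℤ) - (f2 1 (0,1)).val))
          * (f3 1 (1,0) - f3 0 (1,0) - (f3 1 (1,1) - f3 0 (1,1)))
        - ((((f2 0 (1,0)).val : ℤ) - (f2 1 (1,0)).val) - (((f2 0 (1,1)).val : ℤ) - (f2 1 (1,1)).val))
          * (f3 1 (0,1) - f3 0 (0,1) - (f3 1 (0,0) - f3 0 (0,0))) := by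
  rw [hdiff]
  simp only [Fintype.sum_prod_type, Fin.sum_univ_two]
  norm_num [col16, M, Matrix.cons_val_zero, Matrix.cons_val_one, Matrix.head_cons, Matrix.cons_val_two, Matrix.tail_cons]
  ring

end

lemma master (s0 s2 u v A B : ℤ) (hs0 : -1 ≤ s0 ∧ s0 ≤ 1) (hs2 : -1 ≤ s2 ∧ s2 ≤ 1)
    (hu : -2 ≤ u ∧ u ≤ 2) (hv : -2 ≤ v ∧ v ≤ 2)
    (hA : -4 ≤ A ∧ A ≤ 4) (hB : -4 ≤ B ∧ B ≤ 4) :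
    s0 * (u * A + v * B) + s2 * (u * B - v * A) ≤ 16 := by
  obtain ⟨h1, h2⟩ := hs0; obtain ⟨h3, h4⟩ := hs2
  obtain ⟨h5, h6⟩ := hu; obtain ⟨h7, h8⟩ := hv
  interval_cases s0 <;> interval_cases s2 <;> interval_cases u <;> interval_cases v <;> omega

lemma key (f1 : Fin 2 × Fin 2 → Fin 2) (f2 : Fin 2 → Fin 2 × Fin 2 → Fin 2)
    (f3 : Fin 2 → Fin 2 × Fin 2 → ℤ) (hf3 : ∀ s p, f3 s p = -1 ∨ f3 s p = 1) :
    ∑ x : Bits6, output3bit f1 f2 f3 x * T x ≤ 16 := by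
  rw [L1, show row4 0 0 = 0 by decide, show row4 0 1 = 1 by decide,
    show row4 1 0 = 2 by decide, show row4 1 1 = 3 by decide, L2a, L2b]
  have h0 := hsplit f2 f3 (f1 (0,0)) (f1 (0,1)) 0
  have h2 := hsplit f2 f3 (f1 (1,0)) (f1 (1,1)) 2
  rw [e0 f2 f3] at h0
  rw [e2 f2 f3] at h2
  have hre : Sr f2 f3 (f1 (0,0)) 0 + - Sr f2 f3 (f1 (0,1)) 0
      + Sr f2 f3 (f1 (1,0)) 2 + - Sr f2 f3 (f1 (1,1)) 2
      = (Sr f2 f3 (f1 (0,0)) 0 - Sr f2 f3 (f1 (0,1)) 0)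
        + (Sr f2 f3 (f1 (1,0)) 2 - Sr f2 f3 (f1 (1,1)) 2) := by ring
  rw [hre, h0, h2]
  have i1 := (f1 (0,0)).isLt
  have i2 := (f1 (0,1)).isLt
  have i3 := (f1 (1,0)).isLt
  have i4 := (f1 (1,1)).isLt
  have j1 := (f2 0 (0,0)).isLt
  have j2 := (f2 0 (0,1)).isLt
  have j3 := (f2 0 (1,0)).isLt
  have j4 := (f2 0 (1,1)).isLt
  have j5 := (f2 1 (0,0)).isLt
  have j6 := (f2 1 (0,1)).isLt
  have j7 := (f2 1 (1,0)).isLt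
  have j8 := (f2 1 (1,1)).isLt
  have hb : ∀ s q, -1 ≤ f3 s q ∧ f3 s q ≤ 1 := by
    intro s q; rcases hf3 s q with h | h <;> rw [h] <;> omega
  have k1 := hb 0 (0,0); have k2 := hb 0 (0,1); have k3 := hb 0 (1,0)
  have k4 := hb 0 (1,1); have k5 := hb 1 (0,0); have k6 := hb 1 (0,1)
  have k7 := hb 1 (1,0); have k8 := hb 1 (1,1)
  apply master <;> constructor <;> omega

/-- Witness: optimal module-1 strategy. -/
def F1 : Fin 2 × Fin 2 → Fin 2 := fun p => if p.1 = p.2 then 1 else 0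
/-- Witness: optimal module-2 strategy. -/
def F2 : Fin 2 → Fin 2 × Fin 2 → Fin 2 := fun a p => if p.1 = 0 ∧ p.2 = a then 1 else 0
/-- Witness: optimal module-3 strategy. -/
def F3 : Fin 2 → Fin 2 × Fin 2 → ℤ := fun s q => if q.2 = s then -1 else 1


/-- the maximum correlation `(1/64) · Σ_x O(x)·T(x)` over all three-module
one-bit classical sequential processors equals `1/4`. -/
theorem stmt6 :
    IsGreatest {c : ℚ | ∃ (f1 : Fin 2 × Fin 2 → Fin 2) (f2 : Fin 2 → Fin 2 × Fin 2 → Fin 2)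
        (f3 : Fin 2 → Fin 2 × Fin 2 → ℤ),
      (∀ s p, f3 s p = -1 ∨ f3 s p = 1) ∧
      c = (1 / 64 : ℚ) * ∑ x : Bits6, ((output3bit f1 f2 f3 x * T x : ℤ) : ℚ)}
      (1 / 4) := by
  constructor
  · refine ⟨F1, F2, F3, by decide, ?_⟩
    rw [← Int.cast_sum, show (∑ x : Bits6, output3bit F1 F2 F3 x * T x) = 16 by decide]
    norm_num
  · rintro c ⟨f1, f2, f3, hf3, rfl⟩
    have hk := key f1 f2 f3 hf3
    have hc : ((∑ x : Bits6, output3bit f1 f2 f3 x * T x : ℤ) : ℚ) ≤ 16 := by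
      exact_mod_cast hk
    rw [← Int.cast_sum]
    linarith
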